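/- (Fault handler correctness, disallowed case.) Let 𝓡 be a rule table and φ_𝓡 = genFaultHandler 𝓡. Suppose there exist no L_rpc, L_r with ⊢_𝓡 (L_pc, ℓ₁, ℓ₂, ℓ₃) ⇝_opcode ⟨L_rpc, L_r⟩, and the cache input part is κ_i = [opcode, Tag(L_pc), Tag(ℓ₁), Tag(ℓ₂), Tag(ℓ₃)]. Then from the kernel-mode state with cache (κ_i, κ_o), user memory μ, stack (pc, user); σ, and pc 0@T_D, the machine running φ_𝓡 executes entirely in kernel mode and halts in a kernel-mode state with cache (κ_i, κ_o), memory μ, program counter -1@T_D, and some final stack σ'. -/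

import Mathlib

/-! ### Generic machines, traces, refinement, observation, TINI -/

/-- A generic machine: states, events, inputs, a step relation (with optional
event; `none` is the silent action τ), and an initialization function. -/
structure Machine (S E I : Type) where
  step : S → Option E → S → Prop
  init : I → S

/-- `Traces step s t s'`: the machine runs from `s` to `s'` emitting the
(non-silent) events collected in the list `t`. -/
inductive Traces {S E : Type} (step : S → Option E → S → Prop) : S → List E → S → Prop
  | nil (s : S) : Traces step s [] s
  | event {s₁ s₂ s₃ : S} {e : E} {t : List E} :
      step s₁ (some e) s₂ → Traces step s₂ t s₃ → Traces step s₁ (e :: t) s₃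
  | silent {s₁ s₂ s₃ : S} {t : List E} :
      step s₁ none s₂ → Traces step s₂ t s₃ → Traces step s₁ t s₃

/-- `Emits step s t`: from `s` the machine can emit the trace `t`. -/
def Emits {S E : Type} (step : S → Option E → S → Prop) (s : S) (t : List E) : Prop :=
  ∃ s', Traces step s t s'

/-- Refinement of `M₁` into `M₂` via relations on inputs and events. -/
def Refinement {S₁ E₁ I₁ S₂ E₂ I₂ : Type} (M₁ : Machine S₁ E₁ I₁) (M₂ : Machine S₂ E₂ I₂)
    (Ri : I₁ → I₂ → Prop) (Re : E₁ → E₂ → Prop) : Prop :=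
  ∀ i₁ i₂ t₂, Ri i₁ i₂ → Emits M₂.step (M₂.init i₂) t₂ →
    ∃ t₁, Emits M₁.step (M₁.init i₁) t₁ ∧ List.Forall₂ Re t₁ t₂

/-- Refinement via states. -/
def StateRefinement {S₁ E₁ I₁ S₂ E₂ I₂ : Type} (M₁ : Machine S₁ E₁ I₁) (M₂ : Machine S₂ E₂ I₂)
    (Rs : S₁ → S₂ → Prop) (Re : E₁ → E₂ → Prop) : Prop :=
  ∀ s₁ s₂ t₂, Rs s₁ s₂ → Emits M₂.step s₂ t₂ →
    ∃ t₁, Emits M₁.step s₁ t₁ ∧ List.Forall₂ Re t₁ t₂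

open Classical in
/-- Filter the unobservable events out of a trace. -/
noncomputable def filterObs {E : Type} (obs : E → Prop) : List E → List E
  | [] => []
  | e :: t => if obs e then e :: filterObs obs t else filterObs obs t

/-- Indistinguishability of traces: pairwise equal up to the length of the shorter. -/
inductive IndistTrace {E : Type} : List E → List E → Prop
  | nilL (t : List E) : IndistTrace [] t
  | nilR (t : List E) : IndistTrace t []
  | cons (e : E) {t₁ t₂ : List E} : IndistTrace t₁ t₂ → IndistTrace (e :: t₁) (e :: t₂)

/-- Observability of actions: silent actions are never observable. -/
def ObsAct {E : Type} (obs : E → Prop) (α : Option E) : Prop :=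
  ∃ e, α = some e ∧ obs e

/-- Indistinguishability of actions: equal, or both unobservable. -/
def ActIndist {E : Type} (obs : E → Prop) (α₁ α₂ : Option E) : Prop :=
  α₁ = α₂ ∨ (¬ ObsAct obs α₁ ∧ ¬ ObsAct obs α₂)

/-- Indistinguishability of events: equal, or both unobservable. -/
def EvIndist {E : Type} (obs : E → Prop) (e₁ e₂ : E) : Prop :=
  e₁ = e₂ ∨ (¬ obs e₁ ∧ ¬ obs e₂)

/-- Termination-insensitive noninterference for a machine with a notion of
observation `(Ω, obsE, indistI)`. -/
def TINI {S E I Ω : Type} (M : Machine S E I)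
    (obsE : Ω → E → Prop) (indistI : Ω → I → I → Prop) : Prop :=
  ∀ o i₁ i₂ t₁ t₂, indistI o i₁ i₂ →
    Emits M.step (M.init i₁) t₁ → Emits M.step (M.init i₂) t₂ →
    IndistTrace (filterObs (obsE o) t₁) (filterObs (obsE o) t₂)

/-! ### The abstract IFC machine -/

/-- Labeled atoms: an integer payload together with an IFC label. -/
structure Atom (L : Type) where
  val : ℤ
  lab : L

/-- The instruction set (shared by all machines). -/
inductive Instr : Type where
  | add
  | push (m : ℤ)
  | load
  | store
  | jump
  | bnz (k : ℤ)
  | call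
  | ret
  | output

/-- Instruction memories. -/
abbrev InstrMem : Type := ℤ → Option Instr

/-- Stack elements: data atoms or return frames. -/
inductive StkElt (L : Type) : Type where
  | data : Atom L → StkElt L
  | ret : Atom L → StkElt L

/-- Abstract machine states: data memory, stack, program counter. -/
structure AState (L : Type) where
  mem : ℤ → Option (Atom L)
  stk : List (StkElt L)
  pc : Atom L

/-- Memory update. -/
def updMem {L : Type} (μ : ℤ → Option (Atom L)) (p : ℤ) (a : Atom L) :
    ℤ → Option (Atom L) :=
  fun q => if q = p then some a else μ q

section Abstract

variable {L : Type} [SemilatticeSup L] [OrderBot L]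

/-- The step relation of the abstract IFC machine, with fixed instruction
memory `ι`.  Actions are `Option (Atom L)`: `none` is silent, `some a` emits
the event `a`. -/
inductive AStep (ι : InstrMem) : AState L → Option (Atom L) → AState L → Prop
  | add {μ : ℤ → Option (Atom L)} {σ : List (StkElt L)} {n n₁ n₂ : ℤ} {Lpc L₁ L₂ : L} :
      ι n = some .add →
      AStep ι ⟨μ, .data ⟨n₁, L₁⟩ :: .data ⟨n₂, L₂⟩ :: σ, ⟨n, Lpc⟩⟩ none
              ⟨μ, .data ⟨n₁ + n₂, L₁ ⊔ L₂⟩ :: σ, ⟨n + 1, Lpc⟩⟩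
  | push {μ : ℤ → Option (Atom L)} {σ : List (StkElt L)} {n m : ℤ} {Lpc : L} :
      ι n = some (.push m) →
      AStep ι ⟨μ, σ, ⟨n, Lpc⟩⟩ none ⟨μ, .data ⟨m, ⊥⟩ :: σ, ⟨n + 1, Lpc⟩⟩
  | load {μ : ℤ → Option (Atom L)} {σ : List (StkElt L)} {n p m : ℤ} {Lpc L₁ L₂ : L} :
      ι n = some .load → μ p = some ⟨m, L₂⟩ →
      AStep ι ⟨μ, .data ⟨p, L₁⟩ :: σ, ⟨n, Lpc⟩⟩ none
              ⟨μ, .data ⟨m, L₁ ⊔ L₂⟩ :: σ, ⟨n + 1, Lpc⟩⟩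
  | store {μ : ℤ → Option (Atom L)} {σ : List (StkElt L)} {n p m k : ℤ}
      {Lpc L₁ L₂ L₃ : L} :
      ι n = some .store → μ p = some ⟨k, L₃⟩ → L₁ ⊔ Lpc ≤ L₃ →
      AStep ι ⟨μ, .data ⟨p, L₁⟩ :: .data ⟨m, L₂⟩ :: σ, ⟨n, Lpc⟩⟩ none
              ⟨updMem μ p ⟨m, L₁ ⊔ L₂ ⊔ Lpc⟩, σ, ⟨n + 1, Lpc⟩⟩
  | jump {μ : ℤ → Option (Atom L)} {σ : List (StkElt L)} {n n' : ℤ} {Lpc L₁ : L} :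
      ι n = some .jump →
      AStep ι ⟨μ, .data ⟨n', L₁⟩ :: σ, ⟨n, Lpc⟩⟩ none ⟨μ, σ, ⟨n', L₁ ⊔ Lpc⟩⟩
  | bnz {μ : ℤ → Option (Atom L)} {σ : List (StkElt L)} {n m k : ℤ} {Lpc L₁ : L} :
      ι n = some (.bnz k) →
      AStep ι ⟨μ, .data ⟨m, L₁⟩ :: σ, ⟨n, Lpc⟩⟩ none
              ⟨μ, σ, ⟨n + (if m = 0 then 1 else k), L₁ ⊔ Lpc⟩⟩
  | call {μ : ℤ → Option (Atom L)} {σ : List (StkElt L)} {n n' : ℤ} {Lpc L₁ : L} :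
      ι n = some .call →
      AStep ι ⟨μ, .data ⟨n', L₁⟩ :: σ, ⟨n, Lpc⟩⟩ none
              ⟨μ, .ret ⟨n + 1, Lpc⟩ :: σ, ⟨n', L₁ ⊔ Lpc⟩⟩
  | ret {μ : ℤ → Option (Atom L)} {σ : List (StkElt L)} {n : ℤ} {Lpc : L} {pc' : Atom L} :
      ι n = some .ret →
      AStep ι ⟨μ, .ret pc' :: σ, ⟨n, Lpc⟩⟩ none ⟨μ, σ, pc'⟩
  | output {μ : ℤ → Option (Atom L)} {σ : List (StkElt L)} {n m : ℤ} {Lpc L₁ : L} :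
      ι n = some .output →
      AStep ι ⟨μ, .data ⟨m, L₁⟩ :: σ, ⟨n, Lpc⟩⟩ (some ⟨m, L₁ ⊔ Lpc⟩)
              ⟨μ, σ, ⟨n + 1, Lpc⟩⟩

/-- Indistinguishability of atoms at observer `o`: equal, or both unobservable. -/
def AtomIndist (o : L) (a₁ a₂ : Atom L) : Prop :=
  a₁ = a₂ ∨ (¬ a₁.lab ≤ o ∧ ¬ a₂.lab ≤ o)

/-- Pointwise indistinguishability of memories. -/
def MemIndist (o : L) (μ₁ μ₂ : ℤ → Option (Atom L)) : Prop :=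
  ∀ p, Option.Rel (AtomIndist o) (μ₁ p) (μ₂ p)

/-- Indistinguishability of stack elements: data matches data, return frames
match return frames, componentwise. -/
inductive EltIndist (o : L) : StkElt L → StkElt L → Prop
  | data {a₁ a₂ : Atom L} : AtomIndist o a₁ a₂ → EltIndist o (.data a₁) (.data a₂)
  | ret {a₁ a₂ : Atom L} : AtomIndist o a₁ a₂ → EltIndist o (.ret a₁) (.ret a₂)

open Classical in
/-- Stack filtering: drop data atoms and unobservable return frames, keeping the
whole remaining stack at the first observable return frame. -/
noncomputable def stkFilter (o : L) : List (StkElt L) → List (StkElt L)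
  | [] => []
  | .data _ :: σ => stkFilter o σ
  | .ret a :: σ => if a.lab ≤ o then .ret a :: σ else stkFilter o σ

/-- A state is observable when the label of its pc flows to the observer. -/
def StateObs (o : L) (s : AState L) : Prop := s.pc.lab ≤ o

/-- Indistinguishability of abstract machine states. -/
def StateIndist (o : L) (s₁ s₂ : AState L) : Prop :=
  (s₁.pc.lab ≤ o ∧ s₂.pc.lab ≤ o ∧ s₁.pc = s₂.pc ∧
    List.Forall₂ (EltIndist o) s₁.stk s₂.stk ∧ MemIndist o s₁.mem s₂.mem) ∨
  (¬ s₁.pc.lab ≤ o ∧ ¬ s₂.pc.lab ≤ o ∧ MemIndist o s₁.mem s₂.mem ∧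
    List.Forall₂ (EltIndist o) (stkFilter o s₁.stk) (stkFilter o s₂.stk))

/-- Input data for the abstract machine: program, initial stack of atoms,
memory size, initial label. -/
structure AInput (L : Type) where
  prog : InstrMem
  args : List (Atom L)
  size : ℕ
  lab : L

/-- Initial state for the abstract machine: the program is loaded as the
instruction memory, the memory consists of `size` copies of `0 @ lab`, the
stack holds the arguments, and the pc is `0 @ lab`. -/
def aInit (i : AInput L) : InstrMem × AState L :=
  (i.prog,
   ⟨fun q => if 0 ≤ q ∧ q < (i.size : ℤ) then some ⟨0, i.lab⟩ else none,
    i.args.map .data, ⟨0, i.lab⟩⟩)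

/-- The abstract machine step relation as a generic machine step (the fixed
instruction memory is part of the state and is preserved). -/
def AStepP : (InstrMem × AState L) → Option (Atom L) → (InstrMem × AState L) → Prop :=
  fun s α s' => s'.1 = s.1 ∧ AStep s.1 s.2 α s'.2

/-- Indistinguishability of abstract inputs: same program, memory size and
initial label, pointwise indistinguishable argument lists. -/
def AInputIndist (o : L) (i₁ i₂ : AInput L) : Prop :=
  i₁.prog = i₂.prog ∧ i₁.size = i₂.size ∧ i₁.lab = i₂.lab ∧
  List.Forall₂ (AtomIndist o) i₁.args i₂.args

/-- The abstract IFC machine as a generic machine. -/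
def AMachine (L : Type) [SemilatticeSup L] [OrderBot L] :
    Machine (InstrMem × AState L) (Atom L) (AInput L) :=
  ⟨AStepP, aInit⟩

end Abstract

/-! ### The symbolic IFC rule machine -/

/-- Instruction opcodes. -/
inductive Opcode : Type where
  | add | push | load | store | jump | bnz | call | ret | output
deriving DecidableEq

/-- Label expressions of the symbolic IFC rule DSL. -/
inductive LExpr : Type where
  | bot
  | labPC
  | lab1
  | lab2
  | lab3
  | join : LExpr → LExpr → LExpr

/-- Boolean expressions of the symbolic IFC rule DSL. -/
inductive BExpr : Type where
  | tru
  | flows : LExpr → LExpr → BExpr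

/-- A symbolic IFC rule: an allow condition, an expression for the label of the
next pc, and an expression for the label of the result. -/
structure SRule : Type where
  allow : BExpr
  rpc : LExpr
  res : LExpr

/-- A symbolic IFC rule table assigns a rule to every opcode. -/
abbrev RuleTable : Type := Opcode → SRule

section Symbolic

variable {L : Type} [SemilatticeSup L] [OrderBot L]

/-- Evaluation of label expressions at an input tuple `ρ = (L_pc, ℓ₁, ℓ₂, ℓ₃)`. -/
def evalL (ρ : L × L × L × L) : LExpr → L
  | .bot => ⊥
  | .labPC => ρ.1
  | .lab1 => ρ.2.1
  | .lab2 => ρ.2.2.1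
  | .lab3 => ρ.2.2.2
  | .join e₁ e₂ => evalL ρ e₁ ⊔ evalL ρ e₂

/-- Evaluation of boolean expressions. -/
def evalB (ρ : L × L × L × L) : BExpr → Prop
  | .tru => True
  | .flows e₁ e₂ => evalL ρ e₁ ≤ evalL ρ e₂

/-- The IFC enforcement judgment `⊢_𝓡 ρ ⇝_op ⟨L_rpc, L_r⟩`. -/
def Judge (R : RuleTable) (ρ : L × L × L × L) (op : Opcode) (Lrpc Lr : L) : Prop :=
  evalB ρ (R op).allow ∧ evalL ρ (R op).rpc = Lrpc ∧ evalL ρ (R op).res = Lr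

/-- The step relation of the symbolic rule machine, parameterized by a rule
table `R` and a fixed instruction memory `ι`. -/
inductive QStep (R : RuleTable) (ι : InstrMem) :
    AState L → Option (Atom L) → AState L → Prop
  | add {μ : ℤ → Option (Atom L)} {σ : List (StkElt L)} {n n₁ n₂ : ℤ}
      {Lpc L₁ L₂ Lrpc Lr : L} :
      ι n = some .add → Judge R (Lpc, L₁, L₂, ⊥) .add Lrpc Lr →
      QStep R ι ⟨μ, .data ⟨n₁, L₁⟩ :: .data ⟨n₂, L₂⟩ :: σ, ⟨n, Lpc⟩⟩ none
                ⟨μ, .data ⟨n₁ + n₂, Lr⟩ :: σ, ⟨n + 1, Lrpc⟩⟩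
  | push {μ : ℤ → Option (Atom L)} {σ : List (StkElt L)} {n m : ℤ} {Lpc Lrpc Lr : L} :
      ι n = some (.push m) → Judge R (Lpc, ⊥, ⊥, ⊥) .push Lrpc Lr →
      QStep R ι ⟨μ, σ, ⟨n, Lpc⟩⟩ none ⟨μ, .data ⟨m, Lr⟩ :: σ, ⟨n + 1, Lrpc⟩⟩
  | load {μ : ℤ → Option (Atom L)} {σ : List (StkElt L)} {n p m : ℤ}
      {Lpc L₁ L₂ Lrpc Lr : L} :
      ι n = some .load → μ p = some ⟨m, L₂⟩ →
      Judge R (Lpc, L₁, L₂, ⊥) .load Lrpc Lr →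
      QStep R ι ⟨μ, .data ⟨p, L₁⟩ :: σ, ⟨n, Lpc⟩⟩ none
                ⟨μ, .data ⟨m, Lr⟩ :: σ, ⟨n + 1, Lrpc⟩⟩
  | store {μ : ℤ → Option (Atom L)} {σ : List (StkElt L)} {n p m k : ℤ}
      {Lpc L₁ L₂ L₃ Lrpc Lr : L} :
      ι n = some .store → μ p = some ⟨k, L₃⟩ →
      Judge R (Lpc, L₁, L₂, L₃) .store Lrpc Lr →
      QStep R ι ⟨μ, .data ⟨p, L₁⟩ :: .data ⟨m, L₂⟩ :: σ, ⟨n, Lpc⟩⟩ none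
                ⟨updMem μ p ⟨m, Lr⟩, σ, ⟨n + 1, Lrpc⟩⟩
  | jump {μ : ℤ → Option (Atom L)} {σ : List (StkElt L)} {n n' : ℤ}
      {Lpc L₁ Lrpc Lr : L} :
      ι n = some .jump → Judge R (Lpc, L₁, ⊥, ⊥) .jump Lrpc Lr →
      QStep R ι ⟨μ, .data ⟨n', L₁⟩ :: σ, ⟨n, Lpc⟩⟩ none ⟨μ, σ, ⟨n', Lrpc⟩⟩
  | bnz {μ : ℤ → Option (Atom L)} {σ : List (StkElt L)} {n m k : ℤ}
      {Lpc L₁ Lrpc Lr : L} :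
      ι n = some (.bnz k) → Judge R (Lpc, L₁, ⊥, ⊥) .bnz Lrpc Lr →
      QStep R ι ⟨μ, .data ⟨m, L₁⟩ :: σ, ⟨n, Lpc⟩⟩ none
                ⟨μ, σ, ⟨n + (if m = 0 then 1 else k), Lrpc⟩⟩
  | call {μ : ℤ → Option (Atom L)} {σ : List (StkElt L)} {n n' : ℤ}
      {Lpc L₁ Lrpc Lr : L} :
      ι n = some .call → Judge R (Lpc, L₁, ⊥, ⊥) .call Lrpc Lr →
      QStep R ι ⟨μ, .data ⟨n', L₁⟩ :: σ, ⟨n, Lpc⟩⟩ none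
                ⟨μ, .ret ⟨n + 1, Lr⟩ :: σ, ⟨n', Lrpc⟩⟩
  | ret {μ : ℤ → Option (Atom L)} {σ : List (StkElt L)} {n m : ℤ}
      {Lpc L₁ Lrpc Lr : L} :
      ι n = some .ret → Judge R (Lpc, L₁, ⊥, ⊥) .ret Lrpc Lr →
      QStep R ι ⟨μ, .ret ⟨m, L₁⟩ :: σ, ⟨n, Lpc⟩⟩ none ⟨μ, σ, ⟨m, Lrpc⟩⟩
  | output {μ : ℤ → Option (Atom L)} {σ : List (StkElt L)} {n m : ℤ}
      {Lpc L₁ Lrpc Lr : L} :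
      ι n = some .output → Judge R (Lpc, L₁, ⊥, ⊥) .output Lrpc Lr →
      QStep R ι ⟨μ, .data ⟨m, L₁⟩ :: σ, ⟨n, Lpc⟩⟩ (some ⟨m, Lr⟩)
                ⟨μ, σ, ⟨n + 1, Lrpc⟩⟩

/-- The symbolic rule machine step relation as a generic machine step (the
instruction memory is part of the state and preserved). -/
def QStepP (R : RuleTable) :
    (InstrMem × AState L) → Option (Atom L) → (InstrMem × AState L) → Prop :=
  fun s α s' => s'.1 = s.1 ∧ QStep R s.1 s.2 α s'.2

end Symbolic

/-- The rule table `𝓡^abs` corresponding to the IFC mechanism of the abstract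
machine. -/
def RabsTable : RuleTable
  | .add => ⟨.tru, .labPC, .join .lab1 .lab2⟩
  | .output => ⟨.tru, .labPC, .join .lab1 .labPC⟩
  | .push => ⟨.tru, .labPC, .bot⟩
  | .load => ⟨.tru, .labPC, .join .lab1 .lab2⟩
  | .store => ⟨.flows (.join .lab1 .labPC) .lab3, .labPC, .join (.join .lab1 .lab2) .labPC⟩
  | .jump => ⟨.tru, .join .lab1 .labPC, .bot⟩
  | .bnz => ⟨.tru, .join .lab1 .labPC, .bot⟩
  | .call => ⟨.tru, .join .lab1 .labPC, .labPC⟩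
  | .ret => ⟨.tru, .lab1, .bot⟩

/-! ### The concrete machine -/

/-- The default tag. -/
def TD : ℤ := -1

/-- Concrete atoms: an integer payload and an integer tag. -/
structure CAtom : Type where
  val : ℤ
  tag : ℤ
deriving DecidableEq

/-- Concrete stack elements: data atoms, or return frames saving a pc atom and
a privilege bit (`true` = kernel mode). -/
inductive CStkElt : Type where
  | data : CAtom → CStkElt
  | ret : CAtom → Bool → CStkElt

/-- Concrete machine states: privilege bit (`true` = kernel), kernel data
memory (whose first seven cells form the rule cache), user data memory, stack,
and pc. -/
structure CState : Type where
  priv : Bool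
  kmem : ℤ → Option CAtom
  umem : ℤ → Option CAtom
  stk : List CStkElt
  pc : CAtom

/-- Concrete memory update. -/
def updC (μ : ℤ → Option CAtom) (p : ℤ) (a : CAtom) : ℤ → Option CAtom :=
  fun q => if q = p then some a else μ q

/-- Integer encoding of opcodes. -/
def encOp : Opcode → ℤ
  | .add => 0 | .push => 1 | .load => 2 | .store => 3 | .jump => 4
  | .bnz => 5 | .call => 6 | .ret => 7 | .output => 8

/-- The input part of the rule cache holds the given opcode and tags. -/
def cacheIn (κ : ℤ → Option CAtom) (op Tpc T₁ T₂ T₃ : ℤ) : Prop :=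
  κ 0 = some ⟨op, TD⟩ ∧ κ 1 = some ⟨Tpc, TD⟩ ∧ κ 2 = some ⟨T₁, TD⟩ ∧
  κ 3 = some ⟨T₂, TD⟩ ∧ κ 4 = some ⟨T₃, TD⟩

/-- The output part of the rule cache holds the given result tags. -/
def cacheOut (κ : ℤ → Option CAtom) (Trpc Tr : ℤ) : Prop :=
  κ 5 = some ⟨Trpc, TD⟩ ∧ κ 6 = some ⟨Tr, TD⟩

/-- Install a faulting instruction's opcode and tags in the cache input part,
resetting the output part to default tags. -/
def installCache (κ : ℤ → Option CAtom) (op Tpc T₁ T₂ T₃ : ℤ) : ℤ → Option CAtom :=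
  fun q =>
    if q = 0 then some ⟨op, TD⟩ else if q = 1 then some ⟨Tpc, TD⟩
    else if q = 2 then some ⟨T₁, TD⟩ else if q = 3 then some ⟨T₂, TD⟩
    else if q = 4 then some ⟨T₃, TD⟩ else if q = 5 then some ⟨TD, TD⟩
    else if q = 6 then some ⟨TD, TD⟩ else κ q

/-- The step relation of the concrete machine, given a user instruction memory
`ι` and a kernel instruction memory `φ`.  In user mode (`priv = false`) an
instruction either hits in the rule cache and executes with the cached output
tags, or misses, stores its opcode and tags in the cache input, pushes a return
frame, and traps to kernel address 0.  In kernel mode (`priv = true`)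
instructions are fetched from `φ`, tags are ignored (`Load`/`Store` preserve the
tag of the datum), `Output` is forbidden, and `Ret` restores the saved pc and
privilege bit. -/
inductive CStep (ι φ : InstrMem) : CState → Option CAtom → CState → Prop
  -- user mode, cache hit
  | addH {κ μ : ℤ → Option CAtom} {σ : List CStkElt} {n n₁ n₂ Tpc T₁ T₂ Trpc Tr : ℤ} :
      ι n = some .add → cacheIn κ (encOp .add) Tpc T₁ T₂ TD → cacheOut κ Trpc Tr →
      CStep ι φ ⟨false, κ, μ, .data ⟨n₁, T₁⟩ :: .data ⟨n₂, T₂⟩ :: σ, ⟨n, Tpc⟩⟩ none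
                ⟨false, κ, μ, .data ⟨n₁ + n₂, Tr⟩ :: σ, ⟨n + 1, Trpc⟩⟩
  | pushH {κ μ : ℤ → Option CAtom} {σ : List CStkElt} {n m Tpc Trpc Tr : ℤ} :
      ι n = some (.push m) → cacheIn κ (encOp .push) Tpc TD TD TD → cacheOut κ Trpc Tr →
      CStep ι φ ⟨false, κ, μ, σ, ⟨n, Tpc⟩⟩ none
                ⟨false, κ, μ, .data ⟨m, Tr⟩ :: σ, ⟨n + 1, Trpc⟩⟩
  | loadH {κ μ : ℤ → Option CAtom} {σ : List CStkElt} {n p m Tpc T₁ T₂ Trpc Tr : ℤ} :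
      ι n = some .load → μ p = some ⟨m, T₂⟩ →
      cacheIn κ (encOp .load) Tpc T₁ T₂ TD → cacheOut κ Trpc Tr →
      CStep ι φ ⟨false, κ, μ, .data ⟨p, T₁⟩ :: σ, ⟨n, Tpc⟩⟩ none
                ⟨false, κ, μ, .data ⟨m, Tr⟩ :: σ, ⟨n + 1, Trpc⟩⟩
  | storeH {κ μ : ℤ → Option CAtom} {σ : List CStkElt} {n p m k Tpc T₁ T₂ T₃ Trpc Tr : ℤ} :
      ι n = some .store → μ p = some ⟨k, T₃⟩ →
      cacheIn κ (encOp .store) Tpc T₁ T₂ T₃ → cacheOut κ Trpc Tr →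
      CStep ι φ ⟨false, κ, μ, .data ⟨p, T₁⟩ :: .data ⟨m, T₂⟩ :: σ, ⟨n, Tpc⟩⟩ none
                ⟨false, κ, updC μ p ⟨m, Tr⟩, σ, ⟨n + 1, Trpc⟩⟩
  | jumpH {κ μ : ℤ → Option CAtom} {σ : List CStkElt} {n n' Tpc T₁ Trpc Tr : ℤ} :
      ι n = some .jump → cacheIn κ (encOp .jump) Tpc T₁ TD TD → cacheOut κ Trpc Tr →
      CStep ι φ ⟨false, κ, μ, .data ⟨n', T₁⟩ :: σ, ⟨n, Tpc⟩⟩ none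
                ⟨false, κ, μ, σ, ⟨n', Trpc⟩⟩
  | bnzH {κ μ : ℤ → Option CAtom} {σ : List CStkElt} {n m k Tpc T₁ Trpc Tr : ℤ} :
      ι n = some (.bnz k) → cacheIn κ (encOp .bnz) Tpc T₁ TD TD → cacheOut κ Trpc Tr →
      CStep ι φ ⟨false, κ, μ, .data ⟨m, T₁⟩ :: σ, ⟨n, Tpc⟩⟩ none
                ⟨false, κ, μ, σ, ⟨n + (if m = 0 then 1 else k), Trpc⟩⟩
  | callH {κ μ : ℤ → Option CAtom} {σ : List CStkElt} {n n' Tpc T₁ Trpc Tr : ℤ} :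
      ι n = some .call → cacheIn κ (encOp .call) Tpc T₁ TD TD → cacheOut κ Trpc Tr →
      CStep ι φ ⟨false, κ, μ, .data ⟨n', T₁⟩ :: σ, ⟨n, Tpc⟩⟩ none
                ⟨false, κ, μ, .ret ⟨n + 1, Tr⟩ false :: σ, ⟨n', Trpc⟩⟩
  | retH {κ μ : ℤ → Option CAtom} {σ : List CStkElt} {n m Tpc T₁ Trpc Tr : ℤ} :
      ι n = some .ret → cacheIn κ (encOp .ret) Tpc T₁ TD TD → cacheOut κ Trpc Tr →
      CStep ι φ ⟨false, κ, μ, .ret ⟨m, T₁⟩ false :: σ, ⟨n, Tpc⟩⟩ none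
                ⟨false, κ, μ, σ, ⟨m, Trpc⟩⟩
  | outputH {κ μ : ℤ → Option CAtom} {σ : List CStkElt} {n m Tpc T₁ Trpc Tr : ℤ} :
      ι n = some .output → cacheIn κ (encOp .output) Tpc T₁ TD TD → cacheOut κ Trpc Tr →
      CStep ι φ ⟨false, κ, μ, .data ⟨m, T₁⟩ :: σ, ⟨n, Tpc⟩⟩ (some ⟨m, Tr⟩)
                ⟨false, κ, μ, σ, ⟨n + 1, Trpc⟩⟩
  -- user mode, cache miss
  | addM {κ μ : ℤ → Option CAtom} {σ : List CStkElt} {n n₁ n₂ Tpc T₁ T₂ : ℤ} :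
      ι n = some .add → ¬ cacheIn κ (encOp .add) Tpc T₁ T₂ TD →
      CStep ι φ ⟨false, κ, μ, .data ⟨n₁, T₁⟩ :: .data ⟨n₂, T₂⟩ :: σ, ⟨n, Tpc⟩⟩ none
                ⟨true, installCache κ (encOp .add) Tpc T₁ T₂ TD, μ,
                 .ret ⟨n, Tpc⟩ false :: .data ⟨n₁, T₁⟩ :: .data ⟨n₂, T₂⟩ :: σ, ⟨0, TD⟩⟩
  | pushM {κ μ : ℤ → Option CAtom} {σ : List CStkElt} {n m Tpc : ℤ} :
      ι n = some (.push m) → ¬ cacheIn κ (encOp .push) Tpc TD TD TD →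
      CStep ι φ ⟨false, κ, μ, σ, ⟨n, Tpc⟩⟩ none
                ⟨true, installCache κ (encOp .push) Tpc TD TD TD, μ,
                 .ret ⟨n, Tpc⟩ false :: σ, ⟨0, TD⟩⟩
  | loadM {κ μ : ℤ → Option CAtom} {σ : List CStkElt} {n p m Tpc T₁ T₂ : ℤ} :
      ι n = some .load → μ p = some ⟨m, T₂⟩ →
      ¬ cacheIn κ (encOp .load) Tpc T₁ T₂ TD →
      CStep ι φ ⟨false, κ, μ, .data ⟨p, T₁⟩ :: σ, ⟨n, Tpc⟩⟩ none
                ⟨true, installCache κ (encOp .load) Tpc T₁ T₂ TD, μ,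
                 .ret ⟨n, Tpc⟩ false :: .data ⟨p, T₁⟩ :: σ, ⟨0, TD⟩⟩
  | storeM {κ μ : ℤ → Option CAtom} {σ : List CStkElt} {n p m k Tpc T₁ T₂ T₃ : ℤ} :
      ι n = some .store → μ p = some ⟨k, T₃⟩ →
      ¬ cacheIn κ (encOp .store) Tpc T₁ T₂ T₃ →
      CStep ι φ ⟨false, κ, μ, .data ⟨p, T₁⟩ :: .data ⟨m, T₂⟩ :: σ, ⟨n, Tpc⟩⟩ none
                ⟨true, installCache κ (encOp .store) Tpc T₁ T₂ T₃, μ,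
                 .ret ⟨n, Tpc⟩ false :: .data ⟨p, T₁⟩ :: .data ⟨m, T₂⟩ :: σ, ⟨0, TD⟩⟩
  | jumpM {κ μ : ℤ → Option CAtom} {σ : List CStkElt} {n n' Tpc T₁ : ℤ} :
      ι n = some .jump → ¬ cacheIn κ (encOp .jump) Tpc T₁ TD TD →
      CStep ι φ ⟨false, κ, μ, .data ⟨n', T₁⟩ :: σ, ⟨n, Tpc⟩⟩ none
                ⟨true, installCache κ (encOp .jump) Tpc T₁ TD TD, μ,
                 .ret ⟨n, Tpc⟩ false :: .data ⟨n', T₁⟩ :: σ, ⟨0, TD⟩⟩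
  | bnzM {κ μ : ℤ → Option CAtom} {σ : List CStkElt} {n m k Tpc T₁ : ℤ} :
      ι n = some (.bnz k) → ¬ cacheIn κ (encOp .bnz) Tpc T₁ TD TD →
      CStep ι φ ⟨false, κ, μ, .data ⟨m, T₁⟩ :: σ, ⟨n, Tpc⟩⟩ none
                ⟨true, installCache κ (encOp .bnz) Tpc T₁ TD TD, μ,
                 .ret ⟨n, Tpc⟩ false :: .data ⟨m, T₁⟩ :: σ, ⟨0, TD⟩⟩
  | callM {κ μ : ℤ → Option CAtom} {σ : List CStkElt} {n n' Tpc T₁ : ℤ} :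
      ι n = some .call → ¬ cacheIn κ (encOp .call) Tpc T₁ TD TD →
      CStep ι φ ⟨false, κ, μ, .data ⟨n', T₁⟩ :: σ, ⟨n, Tpc⟩⟩ none
                ⟨true, installCache κ (encOp .call) Tpc T₁ TD TD, μ,
                 .ret ⟨n, Tpc⟩ false :: .data ⟨n', T₁⟩ :: σ, ⟨0, TD⟩⟩
  | retM {κ μ : ℤ → Option CAtom} {σ : List CStkElt} {n m Tpc T₁ : ℤ} :
      ι n = some .ret → ¬ cacheIn κ (encOp .ret) Tpc T₁ TD TD →
      CStep ι φ ⟨false, κ, μ, .ret ⟨m, T₁⟩ false :: σ, ⟨n, Tpc⟩⟩ none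
                ⟨true, installCache κ (encOp .ret) Tpc T₁ TD TD, μ,
                 .ret ⟨n, Tpc⟩ false :: .ret ⟨m, T₁⟩ false :: σ, ⟨0, TD⟩⟩
  | outputM {κ μ : ℤ → Option CAtom} {σ : List CStkElt} {n m Tpc T₁ : ℤ} :
      ι n = some .output → ¬ cacheIn κ (encOp .output) Tpc T₁ TD TD →
      CStep ι φ ⟨false, κ, μ, .data ⟨m, T₁⟩ :: σ, ⟨n, Tpc⟩⟩ none
                ⟨true, installCache κ (encOp .output) Tpc T₁ TD TD, μ,
                 .ret ⟨n, Tpc⟩ false :: .data ⟨m, T₁⟩ :: σ, ⟨0, TD⟩⟩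
  -- kernel mode
  | addK {κ μ : ℤ → Option CAtom} {σ : List CStkElt} {n t v₁ t₁ v₂ t₂ : ℤ} :
      φ n = some .add →
      CStep ι φ ⟨true, κ, μ, .data ⟨v₁, t₁⟩ :: .data ⟨v₂, t₂⟩ :: σ, ⟨n, t⟩⟩ none
                ⟨true, κ, μ, .data ⟨v₁ + v₂, TD⟩ :: σ, ⟨n + 1, TD⟩⟩
  | pushK {κ μ : ℤ → Option CAtom} {σ : List CStkElt} {n m t : ℤ} :
      φ n = some (.push m) →
      CStep ι φ ⟨true, κ, μ, σ, ⟨n, t⟩⟩ none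
                ⟨true, κ, μ, .data ⟨m, TD⟩ :: σ, ⟨n + 1, TD⟩⟩
  | loadK {κ μ : ℤ → Option CAtom} {σ : List CStkElt} {n p tp t : ℤ} {a : CAtom} :
      φ n = some .load → κ p = some a →
      CStep ι φ ⟨true, κ, μ, .data ⟨p, tp⟩ :: σ, ⟨n, t⟩⟩ none
                ⟨true, κ, μ, .data a :: σ, ⟨n + 1, TD⟩⟩
  | storeK {κ μ : ℤ → Option CAtom} {σ : List CStkElt} {n p tp t : ℤ} {a : CAtom} :
      φ n = some .store →
      CStep ι φ ⟨true, κ, μ, .data ⟨p, tp⟩ :: .data a :: σ, ⟨n, t⟩⟩ none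
                ⟨true, updC κ p a, μ, σ, ⟨n + 1, TD⟩⟩
  | jumpK {κ μ : ℤ → Option CAtom} {σ : List CStkElt} {n n' t' t : ℤ} :
      φ n = some .jump →
      CStep ι φ ⟨true, κ, μ, .data ⟨n', t'⟩ :: σ, ⟨n, t⟩⟩ none
                ⟨true, κ, μ, σ, ⟨n', TD⟩⟩
  | bnzK {κ μ : ℤ → Option CAtom} {σ : List CStkElt} {n m k t' t : ℤ} :
      φ n = some (.bnz k) →
      CStep ι φ ⟨true, κ, μ, .data ⟨m, t'⟩ :: σ, ⟨n, t⟩⟩ none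
                ⟨true, κ, μ, σ, ⟨n + (if m = 0 then 1 else k), TD⟩⟩
  | callK {κ μ : ℤ → Option CAtom} {σ : List CStkElt} {n n' t' t : ℤ} :
      φ n = some .call →
      CStep ι φ ⟨true, κ, μ, .data ⟨n', t'⟩ :: σ, ⟨n, t⟩⟩ none
                ⟨true, κ, μ, .ret ⟨n + 1, TD⟩ true :: σ, ⟨n', TD⟩⟩
  | retK {κ μ : ℤ → Option CAtom} {σ : List CStkElt} {n t : ℤ} {a : CAtom} {π : Bool} :
      φ n = some .ret →
      CStep ι φ ⟨true, κ, μ, .ret a π :: σ, ⟨n, t⟩⟩ none ⟨π, κ, μ, σ, a⟩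

/-! ### Structured code generators and the IFC fault handler -/

def genFalse : List Instr := [.push 0]
def genTrue : List Instr := [.push 1]
def genSkipIf (n : ℕ) : List Instr := [.bnz ((n : ℤ) + 1)]
def genSkip (n : ℕ) : List Instr := genTrue ++ genSkipIf n
def genIf (t f : List Instr) : List Instr :=
  genSkipIf (f ++ genSkip t.length).length ++ (f ++ genSkip t.length) ++ t
def genLoadFrom (p : ℤ) : List Instr := [.push p, .load]
def genStoreAt (p : ℤ) : List Instr := [.push p, .store]
def genNot : List Instr := genIf genFalse genTrue
def genSome (c : List Instr) : List Instr := c ++ genTrue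
def genNone : List Instr := genFalse

/-- Addresses of the tags in the rule cache. -/
def addrOpLabel : ℤ := 0
def addrTagPC : ℤ := 1
def addrTag1 : ℤ := 2
def addrTag2 : ℤ := 3
def addrTag3 : ℤ := 4
def addrTagRpc : ℤ := 5
def addrTagR : ℤ := 6

/-- Compilation of label expressions, parameterized by the lattice-specific
generators `gb` (bottom) and `gj` (join). -/
def genELab (gb gj : List Instr) : LExpr → List Instr
  | .bot => gb
  | .labPC => genLoadFrom addrTagPC
  | .lab1 => genLoadFrom addrTag1
  | .lab2 => genLoadFrom addrTag2
  | .lab3 => genLoadFrom addrTag3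
  | .join e₁ e₂ => genELab gb gj e₂ ++ genELab gb gj e₁ ++ gj

/-- Compilation of boolean expressions, additionally parameterized by the
lattice-specific generator `gf` (flows). -/
def genBoolE (gb gj gf : List Instr) : BExpr → List Instr
  | .tru => genTrue
  | .flows e₁ e₂ => genELab gb gj e₂ ++ genELab gb gj e₁ ++ gf

/-- Compilation of a symbolic IFC rule. -/
def genApplyRule (gb gj gf : List Instr) (r : SRule) : List Instr :=
  genBoolE gb gj gf r.allow ++
  genIf (genSome (genELab gb gj r.rpc ++ genELab gb gj r.res)) genNone

/-- Guard generator: test whether the cache opcode equals (the encoding of) the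
given opcode. -/
def genMatchOp (op : Opcode) : List Instr :=
  [.push (-(encOp op))] ++ genLoadFrom addrOpLabel ++ [.add] ++ genNot

/-- All the opcodes. -/
def opcodes : List Opcode :=
  [.add, .output, .push, .load, .store, .jump, .bnz, .call, .ret]

/-- Nested case dispatch. -/
def genIndexedCases (genDefault : List Instr) (genGuard genBody : Opcode → List Instr) :
    List Opcode → List Instr
  | [] => genDefault
  | op :: ops => genGuard op ++ genIf (genBody op) (genIndexedCases genDefault genGuard genBody ops)

/-- First phase of the fault handler: dispatch on the opcode and apply the
corresponding symbolic rule. -/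
def genComputeResults (gb gj gf : List Instr) (R : RuleTable) : List Instr :=
  genIndexedCases [] genMatchOp (fun op => genApplyRule gb gj gf (R op)) opcodes

/-- Second phase of the fault handler: store the computed result tags into the
output part of the rule cache. -/
def genStoreResults : List Instr :=
  genIf (genStoreAt addrTagR ++ genStoreAt addrTagRpc ++ genTrue) genFalse

/-- The generated IFC fault handler. -/
def genFaultHandler (gb gj gf : List Instr) (R : RuleTable) : List Instr :=
  genComputeResults gb gj gf R ++ genStoreResults ++
  genIf [.ret] [.push (-1), .jump]

/-! ### Kernel-mode runs and Hoare triples -/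

/-- `PrivSteps ι φ s₁ s₂`: the machine runs from `s₁` to `s₂`, all states
strictly preceding `s₂` being in kernel mode (all such steps are silent). -/
inductive PrivSteps (ι φ : InstrMem) : CState → CState → Prop
  | refl (s : CState) : PrivSteps ι φ s s
  | step {s₁ s₂ s₃ : CState} :
      s₁.priv = true → CStep ι φ s₁ none s₂ → PrivSteps ι φ s₂ s₃ →
      PrivSteps ι φ s₁ s₃

/-- `codeAt φ n c`: the instruction memory `φ` contains the code sequence `c`
starting at address `n`. -/
def codeAt (φ : InstrMem) (n : ℤ) (c : List Instr) : Prop :=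
  ∀ i : ℕ, i < c.length → φ (n + (i : ℤ)) = (c)[i]?

/-- Total-correctness Hoare triple for self-contained kernel code: if `φ`
contains `c` at the current pc and the kernel memory and stack satisfy `P`,
then the machine runs in kernel mode to the end of `c` with kernel memory and
stack satisfying `Q` (the user memory is untouched). -/
def HT (c : List Instr) (P Q : (ℤ → Option CAtom) → List CStkElt → Prop) : Prop :=
  ∀ (ι φ : InstrMem) (n : ℤ) (κ μ : ℤ → Option CAtom) (σ : List CStkElt),
    codeAt φ n c → P κ σ →
    ∃ κ' σ', Q κ' σ' ∧
      PrivSteps ι φ ⟨true, κ, μ, σ, ⟨n, TD⟩⟩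
                    ⟨true, κ', μ, σ', ⟨n + (c.length : ℤ), TD⟩⟩

/-! ### Concrete lattices -/

/-- A concrete lattice: an encoding of the labels of `L` as integer tags,
together with code sequences correctly implementing `⊥`, `⊔` and the test `≤`
on encoded tags (specified by total-correctness Hoare triples in
weakest-precondition style). -/
structure ConcreteLattice (L : Type) [SemilatticeSup L] [OrderBot L] where
  Tag : L → ℤ
  Lab : ℤ → L
  labTag : ∀ l : L, Lab (Tag l) = l
  genBot : List Instr
  genJoin : List Instr
  genFlows : List Instr
  botSpec : ∀ P : (ℤ → Option CAtom) → List CStkElt → Prop,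
    HT genBot (fun κ σ => P κ (.data ⟨Tag ⊥, TD⟩ :: σ)) P
  joinSpec : ∀ P : (ℤ → Option CAtom) → List CStkElt → Prop,
    HT genJoin
      (fun κ σ => ∃ (l₁ l₂ : L) (σ₀ : List CStkElt),
        σ = .data ⟨Tag l₁, TD⟩ :: .data ⟨Tag l₂, TD⟩ :: σ₀ ∧
        P κ (.data ⟨Tag (l₁ ⊔ l₂), TD⟩ :: σ₀)) P
  flowsSpec : ∀ P : (ℤ → Option CAtom) → List CStkElt → Prop,
    HT genFlows
      (fun κ σ => ∃ (l₁ l₂ : L) (σ₀ : List CStkElt),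
        σ = .data ⟨Tag l₁, TD⟩ :: .data ⟨Tag l₂, TD⟩ :: σ₀ ∧
        ∀ b : ℤ, (b ≠ 0 ↔ l₁ ≤ l₂) → P κ (.data ⟨b, TD⟩ :: σ₀)) P

section Concrete

variable {L : Type} [SemilatticeSup L] [OrderBot L]

/-- The IFC fault handler compiled from a rule table, using the code generators
of a concrete lattice. -/
def faultHandler (CL : ConcreteLattice L) (R : RuleTable) : List Instr :=
  genFaultHandler CL.genBot CL.genJoin CL.genFlows R

/-- The kernel instruction memory consisting of exactly the compiled fault
handler, installed starting at address 0. -/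
def handlerMem (CL : ConcreteLattice L) (R : RuleTable) : InstrMem :=
  fun q => if 0 ≤ q then (faultHandler CL R)[q.toNat]? else none

/-! ### The concrete machine as a generic machine, and matching relations -/

/-- Input data for the concrete machine. -/
structure CInput : Type where
  prog : InstrMem
  args : List CAtom
  size : ℕ
  tag : ℤ

/-- The initial rule cache, holding an illegal opcode so that the first user
instruction always faults. -/
def initCache : ℤ → Option CAtom :=
  fun q => if 0 ≤ q ∧ q ≤ 6 then some ⟨if q = 0 then -1 else TD, TD⟩ else none

/-- The initial state of the concrete machine: user mode, cache initialized
with an illegal opcode, user memory of `size` copies of `0 @ tag`, stack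
holding the arguments, pc `0 @ tag`. -/
def cInit (i : CInput) : InstrMem × CState :=
  (i.prog,
   ⟨false, initCache,
    fun q => if 0 ≤ q ∧ q < (i.size : ℤ) then some ⟨0, i.tag⟩ else none,
    i.args.map .data, ⟨0, i.tag⟩⟩)

/-- The concrete machine step relation as a generic machine step, with the
user program part of the state and the kernel memory `φ` fixed. -/
def CStepP (φ : InstrMem) :
    (InstrMem × CState) → Option CAtom → (InstrMem × CState) → Prop :=
  fun s α s' => s'.1 = s.1 ∧ CStep s.1 φ s.2 α s'.2

/-- Matching of events/atoms: the concrete atom is the `Tag`-image of the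
abstract one. -/
def matchAtomC (CL : ConcreteLattice L) (a : Atom L) (c : CAtom) : Prop :=
  c = ⟨a.val, CL.Tag a.lab⟩

/-- Matching of inputs: same program and memory size, tag-encoded arguments and
initial label. -/
def matchInputC (CL : ConcreteLattice L) (i : AInput L) (ic : CInput) : Prop :=
  ic.prog = i.prog ∧
  ic.args = i.args.map (fun a => ⟨a.val, CL.Tag a.lab⟩) ∧
  ic.size = i.size ∧ ic.tag = CL.Tag i.lab

/-- Matching of stack elements: data matches data, return frames match return
frames with the user privilege bit, componentwise `Tag`-encoded. -/
inductive MatchStk (CL : ConcreteLattice L) : StkElt L → CStkElt → Prop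
  | data {a : Atom L} {c : CAtom} :
      matchAtomC CL a c → MatchStk CL (.data a) (.data c)
  | ret {a : Atom L} {c : CAtom} :
      matchAtomC CL a c → MatchStk CL (.ret a) (.ret c false)

/-- Cache consistency `𝓡 ⊢ κ`: the rule cache never lies with respect to the
rule table `R`. -/
def CacheConsistent (CL : ConcreteLattice L) (R : RuleTable)
    (κ : ℤ → Option CAtom) : Prop :=
  ∀ (op : Opcode) (Lpc L₁ L₂ L₃ : L),
    cacheIn κ (encOp op) (CL.Tag Lpc) (CL.Tag L₁) (CL.Tag L₂) (CL.Tag L₃) →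
    ∃ Lrpc Lr : L, Judge R (Lpc, L₁, L₂, L₃) op Lrpc Lr ∧
      cacheOut κ (CL.Tag Lrpc) (CL.Tag Lr)

/-- Matching of symbolic-rule-machine states and concrete states (`≈ˢᶜ`). -/
def MatchState (CL : ConcreteLattice L) (R : RuleTable)
    (qs : AState L) (cs : CState) : Prop :=
  cs.priv = false ∧
  CacheConsistent CL R cs.kmem ∧
  (∀ p, Option.Rel (matchAtomC CL) (qs.mem p) (cs.umem p)) ∧
  List.Forall₂ (MatchStk CL) qs.stk cs.stk ∧
  cs.pc = ⟨qs.pc.val, CL.Tag qs.pc.lab⟩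

end Concrete

/-!
The handler is verified in a weakest-precondition Hoare logic for kernel code (`HT`). The lattice
generators are specified for *every* postcondition, so a postcondition may pin the kernel memory
exactly: this is how the cache is shown to be untouched, and how the invariant that the cache
input still describes the faulting instruction survives the calls to `genBot`, `genJoin` and
`genFlows`: it is demanded of every postcondition. The opcode dispatch selects the rule of
the faulting opcode because opcode encodings are injective; since that rule is disallowed, its
compiled allow-test leaves `0` on the stack, `genStoreResults` then skips the cache writes, and the
final conditional takes its `Push (-1); Jump` branch.
-/

abbrev Assertion : Type := (ℤ → Option CAtom) → List CStkElt → Prop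

namespace Assertion

def withTop (Q : Assertion) (v : ℤ) : Assertion := fun κ σ => Q κ (.data ⟨v, TD⟩ :: σ)

def branch (Pt Pf : Assertion) : Assertion :=
  fun κ σ => ∃ b σ₀, σ = .data ⟨b, TD⟩ :: σ₀ ∧ if b = 0 then Pf κ σ₀ else Pt κ σ₀

end Assertion

namespace PrivSteps

variable {ι φ : InstrMem}

theorem trans {s₁ s₂ s₃ : CState} (h₁ : PrivSteps ι φ s₁ s₂) (h₂ : PrivSteps ι φ s₂ s₃) :
    PrivSteps ι φ s₁ s₃ := by
  induction h₁ with
  | refl => exact h₂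
  | step hp hs _ ih => exact .step hp hs (ih h₂)

theorem single {s₁ s₂ : CState} (hp : s₁.priv = true) (hs : CStep ι φ s₁ none s₂) :
    PrivSteps ι φ s₁ s₂ :=
  .step hp hs (.refl _)

theorem bnz_of_ne_zero {κ μ : ℤ → Option CAtom} {σ : List CStkElt} {n k b t t' : ℤ}
    (h : φ n = some (.bnz k)) (hb : b ≠ 0) :
    PrivSteps ι φ ⟨true, κ, μ, .data ⟨b, t⟩ :: σ, ⟨n, t'⟩⟩ ⟨true, κ, μ, σ, ⟨n + k, TD⟩⟩ := by
  convert single rfl (CStep.bnzK h) using 3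
  simp [hb]

end PrivSteps

namespace codeAt

variable {φ : InstrMem} {n : ℤ}

theorem append_left {c₁ c₂ : List Instr} (h : codeAt φ n (c₁ ++ c₂)) : codeAt φ n c₁ :=
  fun i hi => by rw [h i (by simp; omega), List.getElem?_append_left hi]

theorem append_right {c₁ c₂ : List Instr} (h : codeAt φ n (c₁ ++ c₂)) :
    codeAt φ (n + c₁.length) c₂ := fun i hi => by
  have := h (c₁.length + i) (by simp; omega)
  rwa [Nat.cast_add, ← add_assoc, List.getElem?_append_right (by omega),
    Nat.add_sub_cancel_left] at this

theorem head {a : Instr} {c : List Instr} (h : codeAt φ n (a :: c)) : φ n = some a := by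
  simpa using h 0 (by simp)

end codeAt

namespace HT

variable {c c₁ c₂ : List Instr} {P P' Q R : Assertion}

theorem strengthen (h : HT c P Q) (hP : ∀ κ σ, P' κ σ → P κ σ) : HT c P' Q :=
  fun ι φ n κ μ σ hc hp => h ι φ n κ μ σ hc (hP κ σ hp)

theorem append (h₁ : HT c₁ P Q) (h₂ : HT c₂ Q R) : HT (c₁ ++ c₂) P R := by
  intro ι φ n κ μ σ hc hp
  obtain ⟨κ₁, σ₁, hq, hs₁⟩ := h₁ ι φ n κ μ σ hc.append_left hp
  obtain ⟨κ₂, σ₂, hr, hs₂⟩ := h₂ ι φ _ κ₁ μ σ₁ hc.append_right hq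
  refine ⟨κ₂, σ₂, hr, ?_⟩
  rw [List.length_append, Nat.cast_add, ← add_assoc]
  exact hs₁.trans hs₂

theorem of_false : HT c (fun _ _ => False) Q := fun _ _ _ _ _ _ _ h => h.elim

theorem of_step {a : Instr}
    (h : ∀ ι φ n κ μ σ, φ n = some a → P κ σ → ∃ κ' σ', Q κ' σ' ∧
      CStep ι φ ⟨true, κ, μ, σ, ⟨n, TD⟩⟩ none ⟨true, κ', μ, σ', ⟨n + 1, TD⟩⟩) :
    HT [a] P Q := by
  intro ι φ n κ μ σ hc hp
  obtain ⟨κ', σ', hq, hs⟩ := h ι φ n κ μ σ hc.head hp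
  exact ⟨κ', σ', hq, by simpa using PrivSteps.single rfl hs⟩

end HT

theorem ht_push (m : ℤ) (Q : Assertion) : HT [.push m] (Q.withTop m) Q :=
  HT.of_step fun _ _ _ κ _ _ h hQ => ⟨κ, _, hQ, .pushK h⟩

theorem ht_add (Q : Assertion) :
    HT [.add] (fun κ σ => ∃ v₁ t₁ v₂ t₂ σ₀, σ = .data ⟨v₁, t₁⟩ :: .data ⟨v₂, t₂⟩ :: σ₀ ∧
      Q κ (.data ⟨v₁ + v₂, TD⟩ :: σ₀)) Q :=
  HT.of_step fun _ _ _ κ _ _ h ⟨_, _, _, _, _, hσ, hQ⟩ => hσ ▸ ⟨κ, _, hQ, .addK h⟩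

theorem ht_load (Q : Assertion) :
    HT [.load] (fun κ σ => ∃ p t a σ₀, σ = .data ⟨p, t⟩ :: σ₀ ∧ κ p = some a ∧
      Q κ (.data a :: σ₀)) Q :=
  HT.of_step fun _ _ _ κ _ _ h ⟨_, _, _, _, hσ, ha, hQ⟩ => hσ ▸ ⟨κ, _, hQ, .loadK h ha⟩

theorem ht_bnz_zero (k : ℤ) (Q : Assertion) :
    HT [.bnz k] (fun κ σ => ∃ σ₀, σ = .data ⟨0, TD⟩ :: σ₀ ∧ Q κ σ₀) Q :=
  HT.of_step fun _ _ _ κ _ _ h ⟨_, hσ, hQ⟩ =>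
    hσ ▸ ⟨κ, _, hQ, by simpa using CStep.bnzK (m := 0) (t' := TD) (t := TD) h⟩

theorem ht_genLoadFrom (p : ℤ) (Q : Assertion) :
    HT (genLoadFrom p) (fun κ σ => ∃ a, κ p = some a ∧ Q κ (.data a :: σ)) Q :=
  ((ht_push p _).append (ht_load Q)).strengthen fun _ σ ⟨a, ha, hQ⟩ => ⟨p, TD, a, σ, rfl, ha, hQ⟩

theorem ht_genSkip (t : List Instr) (Q : Assertion) : HT (genSkip t.length ++ t) Q Q := by
  intro ι φ n κ μ σ hc hQ
  have hpush : φ n = some (.push 1) := hc.append_left.head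
  have hbnz : φ (n + 1) = some (.bnz (t.length + 1)) := by
    simpa [genSkip, genTrue, genSkipIf] using hc 1 (by simp [genSkip, genTrue, genSkipIf])
  refine ⟨κ, σ, hQ, (PrivSteps.single rfl (.pushK hpush)).trans ?_⟩
  convert PrivSteps.bnz_of_ne_zero hbnz one_ne_zero using 3
  simp [genSkip, genTrue, genSkipIf]
  ring

theorem ht_genIf {t f : List Instr} {Pt Pf Q : Assertion} (ht : HT t Pt Q) (hf : HT f Pf Q) :
    HT (genIf t f) (Pt.branch Pf) Q := by
  intro ι φ n κ μ σ hc ⟨b, σ₀, hσ, hb⟩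
  subst hσ
  split_ifs at hb with hb0
  · subst hb0
    have e : genIf t f =
        genSkipIf (f ++ genSkip t.length).length ++ f ++ (genSkip t.length ++ t) := by
      simp [genIf]
    rw [e] at hc ⊢
    exact ((ht_bnz_zero _ Pf).append hf |>.append (ht_genSkip t Q)) ι φ n κ μ _ hc ⟨σ₀, rfl, hb⟩
  · obtain ⟨κ', σ', hQ, hrun⟩ := ht ι φ _ κ μ σ₀ hc.append_right hb
    refine ⟨κ', σ', hQ, ?_⟩
    rw [genIf, List.length_append, Nat.cast_add, ← add_assoc]
    refine .trans ?_ hrun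
    convert PrivSteps.bnz_of_ne_zero hc.append_left.append_left.head hb0 using 4
    simp [genSkipIf]

theorem ht_genNot (Q : Assertion) :
    HT genNot (fun κ σ => ∃ b σ₀, σ = .data ⟨b, TD⟩ :: σ₀ ∧
      Q κ (.data ⟨if b = 0 then 1 else 0, TD⟩ :: σ₀)) Q :=
  (ht_genIf (ht_push 0 Q) (ht_push 1 Q)).strengthen fun _ _ ⟨b, σ₀, hσ, hQ⟩ =>
    ⟨b, σ₀, hσ, by split_ifs at hQ ⊢ <;> exact hQ⟩

theorem encOp_injective : Function.Injective encOp := by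
  intro a b h
  cases a <;> cases b <;> first | rfl | (revert h; decide)

theorem mem_opcodes (op : Opcode) : op ∈ opcodes := by
  cases op <;> simp [opcodes]

theorem ht_genMatchOp (op o : Opcode) {Q : Assertion}
    (hQ : ∀ κ σ, Q κ σ → κ addrOpLabel = some ⟨encOp op, TD⟩) :
    HT (genMatchOp o) (Q.withTop (if o = op then 1 else 0)) Q := by
  refine ((((ht_push _ _).append (ht_genLoadFrom _ _)).append (ht_add _)).append
    (ht_genNot Q)).strengthen fun κ σ h =>
      ⟨_, hQ _ _ h, _, _, _, _, σ, rfl, _, σ, rfl, ?_⟩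
  have hsum : encOp op + -encOp o = 0 ↔ o = op :=
    ⟨fun h => encOp_injective (by omega), fun h => by rw [h, add_neg_cancel]⟩
  simpa only [Assertion.withTop, hsum] using h

theorem ht_genIndexedCases {dflt : List Instr} {guard body : Opcode → List Instr}
    {I : (ℤ → Option CAtom) → Prop} {P Q : Assertion} {op : Opcode}
    (hguard : ∀ o (G : Assertion), (∀ κ σ, G κ σ → I κ) →
      HT (guard o) (G.withTop (if o = op then 1 else 0)) G)
    (hbody : HT (body op) P Q) (hP : ∀ κ σ, P κ σ → I κ) :
    ∀ {ops : List Opcode}, op ∈ ops → HT (genIndexedCases dflt guard body ops) P Q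
  | o :: ops, hop => by
    show HT (guard o ++ genIf (body o) (genIndexedCases dflt guard body ops)) P Q
    by_cases ho : o = op
    · subst ho
      refine (hguard o _ ?_).append (ht_genIf hbody HT.of_false) |>.strengthen
        fun κ σ h => ⟨1, σ, by simp, by simpa using h⟩
      rintro κ σ ⟨b, σ₀, -, h⟩
      split_ifs at h
      exacts [h.elim, hP _ _ h]
    · have hrest := ht_genIndexedCases (dflt := dflt) hguard hbody hP
        ((List.mem_cons.1 hop).resolve_left (Ne.symm ho))
      refine (hguard o _ ?_).append (ht_genIf HT.of_false hrest) |>.strengthen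
        fun κ σ h => ⟨0, σ, by simp [ho], by simpa using h⟩
      rintro κ σ ⟨b, σ₀, -, h⟩
      split_ifs at h
      exacts [hP _ _ h, h.elim]

section Rules

variable {L : Type} [SemilatticeSup L] [OrderBot L] (CL : ConcreteLattice L) (ρ : L × L × L × L)

def CachesInput (c : ℤ) (κ : ℤ → Option CAtom) : Prop :=
  cacheIn κ c (CL.Tag ρ.1) (CL.Tag ρ.2.1) (CL.Tag ρ.2.2.1) (CL.Tag ρ.2.2.2)

theorem ht_genELab (c : ℤ) : ∀ (e : LExpr) {Q : Assertion},
    (∀ κ σ, Q κ σ → CachesInput CL ρ c κ) →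
    HT (genELab CL.genBot CL.genJoin e) (Q.withTop (CL.Tag (evalL ρ e))) Q
  | .bot, Q, _ => CL.botSpec Q
  | .labPC, Q, hQ => (ht_genLoadFrom _ Q).strengthen fun _ _ h => ⟨_, (hQ _ _ h).2.1, h⟩
  | .lab1, Q, hQ => (ht_genLoadFrom _ Q).strengthen fun _ _ h => ⟨_, (hQ _ _ h).2.2.1, h⟩
  | .lab2, Q, hQ => (ht_genLoadFrom _ Q).strengthen fun _ _ h => ⟨_, (hQ _ _ h).2.2.2.1, h⟩
  | .lab3, Q, hQ => (ht_genLoadFrom _ Q).strengthen fun _ _ h => ⟨_, (hQ _ _ h).2.2.2.2, h⟩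
  | .join e₁ e₂, Q, hQ =>
    let J : Assertion := fun κ σ => ∃ (l₁ l₂ : L) (σ₀ : List CStkElt),
      σ = .data ⟨CL.Tag l₁, TD⟩ :: .data ⟨CL.Tag l₂, TD⟩ :: σ₀ ∧
      Q κ (.data ⟨CL.Tag (l₁ ⊔ l₂), TD⟩ :: σ₀)
    have hJ : ∀ κ σ, J κ σ → CachesInput CL ρ c κ := fun _ _ ⟨_, _, _, _, h⟩ => hQ _ _ h
    (((ht_genELab c e₂ (Q := J.withTop _) fun _ _ h => hJ _ _ h).append
      (ht_genELab c e₁ hJ)).append (CL.joinSpec Q)).strengthen fun _ σ h => ⟨_, _, σ, rfl, h⟩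

theorem ht_genBoolE (c : ℤ) (be : BExpr) {Q : Assertion}
    (hQ : ∀ κ σ, Q κ σ → CachesInput CL ρ c κ) :
    HT (genBoolE CL.genBot CL.genJoin CL.genFlows be)
      (fun κ σ => ∀ b : ℤ, (b ≠ 0 ↔ evalB ρ be) → Q κ (.data ⟨b, TD⟩ :: σ)) Q := by
  cases be with
  | tru => exact (ht_push 1 Q).strengthen fun _ _ h => h 1 (by simp [evalB])
  | flows e₁ e₂ =>
    let F : Assertion := fun κ σ => ∃ (l₁ l₂ : L) (σ₀ : List CStkElt),
      σ = .data ⟨CL.Tag l₁, TD⟩ :: .data ⟨CL.Tag l₂, TD⟩ :: σ₀ ∧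
      ∀ b : ℤ, (b ≠ 0 ↔ l₁ ≤ l₂) → Q κ (.data ⟨b, TD⟩ :: σ₀)
    have hF : ∀ κ σ, F κ σ → CachesInput CL ρ c κ := by
      rintro κ σ ⟨l₁, l₂, σ₀, -, h⟩
      by_cases hl : l₁ ≤ l₂
      · exact hQ _ _ (h 1 (by simp [hl]))
      · exact hQ _ _ (h 0 (by simp [hl]))
    exact (((ht_genELab CL ρ c e₂ (Q := F.withTop _) fun _ _ h => hF _ _ h).append
      (ht_genELab CL ρ c e₁ hF)).append (CL.flowsSpec Q)).strengthen
      fun _ σ h => ⟨_, _, σ, rfl, h⟩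

theorem ht_genApplyRule_of_not_allow (c : ℤ) {r : SRule} (hr : ¬ evalB ρ r.allow)
    {Q : Assertion} (hQ : ∀ κ σ, Q κ σ → CachesInput CL ρ c κ) :
    HT (genApplyRule CL.genBot CL.genJoin CL.genFlows r) (Q.withTop 0) Q := by
  have hB : ∀ κ σ, Assertion.branch (fun _ _ => False) (Q.withTop 0) κ σ →
      CachesInput CL ρ c κ := by
    rintro κ σ ⟨b, σ₀, -, h⟩
    split_ifs at h
    exacts [hQ _ _ h, h.elim]
  refine ((ht_genBoolE CL ρ c r.allow hB).append
    (ht_genIf HT.of_false (ht_push 0 Q))).strengthen fun κ σ h b hb => ?_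
  obtain rfl : b = 0 := not_not.1 (mt hb.1 hr)
  exact ⟨0, σ, rfl, by simpa using h⟩

theorem ht_genComputeResults_of_not_allow (R : RuleTable) {op : Opcode}
    (hallow : ¬ evalB ρ (R op).allow) {Q : Assertion}
    (hQ : ∀ κ σ, Q κ σ → CachesInput CL ρ (encOp op) κ) :
    HT (genComputeResults CL.genBot CL.genJoin CL.genFlows R) (Q.withTop 0) Q :=
  ht_genIndexedCases (fun o _ hG => ht_genMatchOp op o hG)
    (ht_genApplyRule_of_not_allow CL ρ _ hallow hQ) (fun _ _ h => (hQ _ _ h).1) (mem_opcodes op)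

end Rules

theorem ht_genStoreResults_of_zero (Q : Assertion) :
    HT genStoreResults (fun κ σ => (∃ σ₀, σ = .data ⟨0, TD⟩ :: σ₀) ∧ Q κ σ) Q :=
  (ht_genIf HT.of_false (ht_push 0 Q)).strengthen fun _ _ ⟨⟨σ₀, hσ⟩, h⟩ =>
    ⟨0, σ₀, hσ, by rw [hσ] at h; exact h⟩

theorem privSteps_genIf_ret_halt {ι φ : InstrMem} {n : ℤ} {κ μ : ℤ → Option CAtom}
    {σ : List CStkElt} (hc : codeAt φ n (genIf [.ret] [.push (-1), .jump])) :
    PrivSteps ι φ ⟨true, κ, μ, .data ⟨0, TD⟩ :: σ, ⟨n, TD⟩⟩ ⟨true, κ, μ, σ, ⟨-1, TD⟩⟩ := by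
  have hcode (i : ℕ) (hi : i < 3) := hc i (by simp [genIf, genSkip, genTrue, genSkipIf]; omega)
  have h₀ : φ n = some (.bnz 5) := by simpa [genIf, genSkip, genTrue, genSkipIf] using hcode 0
  have h₁ : φ (n + 1) = some (.push (-1)) := by simpa [genIf, genSkipIf] using hcode 1
  have h₂ : φ (n + 1 + 1) = some .jump := by
    simpa [genIf, genSkipIf, add_assoc] using hcode 2
  exact .step rfl (by simpa using CStep.bnzK (m := 0) (t' := TD) (t := TD) h₀)
    (.step rfl (.pushK h₁) (.single rfl (.jumpK h₂)))

/-- Fault handler correctness, disallowed case: if the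
symbolic IFC enforcement judgment does not allow the faulting instruction, then
the generated fault handler runs entirely in kernel mode and halts at kernel pc
`-1` with the cache and the user memory unchanged. -/
theorem fault_handler_correct_disallowed {L : Type} [SemilatticeSup L] [OrderBot L]
    (CL : ConcreteLattice L) (R : RuleTable) (ι φ : InstrMem)
    (hφ : codeAt φ 0 (faultHandler CL R))
    (op : Opcode) (Lpc ℓ₁ ℓ₂ ℓ₃ : L)
    (hjudge : ¬ ∃ Lrpc Lr : L, Judge R (Lpc, ℓ₁, ℓ₂, ℓ₃) op Lrpc Lr)
    (κ μ : ℤ → Option CAtom) (σ : List CStkElt) (pc : CAtom)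
    (hin : cacheIn κ (encOp op) (CL.Tag Lpc) (CL.Tag ℓ₁) (CL.Tag ℓ₂) (CL.Tag ℓ₃)) :
    ∃ σ' : List CStkElt,
      PrivSteps ι φ
        ⟨true, κ, μ, .ret pc false :: σ, ⟨0, TD⟩⟩
        ⟨true, κ, μ, σ', ⟨-1, TD⟩⟩ := by
  have hallow : ¬ evalB (Lpc, ℓ₁, ℓ₂, ℓ₃) (R op).allow := fun h => hjudge ⟨_, _, h, rfl, rfl⟩
  let Q : Assertion := fun κ' σ' => κ' = κ ∧ σ' = .data ⟨0, TD⟩ :: .ret pc false :: σ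
  have hQ : ∀ κ' σ', (∃ σ₀, σ' = .data ⟨0, TD⟩ :: σ₀) ∧ Q κ' σ' →
      CachesInput CL (Lpc, ℓ₁, ℓ₂, ℓ₃) (encOp op) κ' := by
    rintro _ _ ⟨-, rfl, -⟩
    exact hin
  obtain ⟨κ', σ', ⟨rfl, rfl⟩, hrun⟩ :=
    (ht_genComputeResults_of_not_allow CL _ R hallow hQ).append (ht_genStoreResults_of_zero Q)
      ι φ 0 κ μ _ hφ.append_left ⟨⟨_, rfl⟩, rfl, rfl⟩
  exact ⟨_, hrun.trans (privSteps_genIf_ret_halt hφ.append_right)⟩
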